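/- arXiv:1101.1015 — 9 statements merged into one kernel-verified Lean document; each statement's English description precedes it below -/
import Mathlib

section
/- For the 6×6 matrix H(g,g;z) (the matrix H(g,h;z) of the loop-graph model with h = g), the diagonal matrix Θ with entries Θ₁₁ = Θ₆₆ = (1-g)(1-z)/(1+z) [equivalently ((1+g)-(1+g)g)(1-z)/((1+g)(1+z))], Θ₂₂ = Θ₅₅ = 1-g, Θ₃₃ = Θ₄₄ = 1+g, satisfies the Dieudonné hidden-Hermiticity relation Hᵀ = Θ·H·Θ⁻¹, provided g ≠ ±1 and z ≠ ±1. -/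
/-!
For diagonal `Θ = diagonal d`, `Hᵀ Θ = Θ H` is the detailed-balance condition
`d i * H i j = d j * H j i`, checked entry by entry; since `Θ` is invertible it is equivalent
to `Hᵀ = Θ H Θ⁻¹`.
-/

open Matrix

namespace Matrix

variable {n R : Type*} [Fintype n] [DecidableEq n]

theorem transpose_eq_mul_mul_inv_of_transpose_mul_eq [CommRing R] {A Θ : Matrix n n R}
    (hΘ : IsUnit Θ.det) (h : Aᵀ * Θ = Θ * A) : Aᵀ = Θ * A * Θ⁻¹ := by
  rw [← h, mul_nonsing_inv_cancel_right _ _ hΘ]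

theorem transpose_mul_diagonal_eq_diagonal_mul [CommSemiring R] {A : Matrix n n R} {d : n → R}
    (h : ∀ i j, d i * A i j = d j * A j i) : Aᵀ * diagonal d = diagonal d * A := by
  ext i j
  rw [mul_diagonal, diagonal_mul, transpose_apply, h, mul_comm]

end Matrix

theorem stmt2 (g z : ℝ) (hg1 : g ≠ 1) (hg2 : g ≠ -1) (hz1 : z ≠ 1) (hz2 : z ≠ -1) :
    let H : Matrix (Fin 6) (Fin 6) ℝ :=
      !![2, -1-z, 0, 0, 0, 0;
         -1+z, 3, -1-g, -1-g, 0, 0;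
         0, -1+g, 2, 0, -1+g, 0;
         0, -1+g, 0, 2, -1+g, 0;
         0, 0, -1-g, -1-g, 3, -1+z;
         0, 0, 0, 0, -1-z, 2]
    let Θ : Matrix (Fin 6) (Fin 6) ℝ :=
      Matrix.diagonal ![(1-g)*(1-z)/(1+z), 1-g, 1+g, 1+g, 1-g, (1-g)*(1-z)/(1+z)]
    Hᵀ = Θ * H * Θ⁻¹ := by
  intro H Θ
  have hg1' : 1 - g ≠ 0 := sub_ne_zero.mpr hg1.symm
  have hg2' : 1 + g ≠ 0 := fun h => hg2 (by linarith)
  have hz1' : 1 - z ≠ 0 := sub_ne_zero.mpr hz1.symm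
  have hz2' : 1 + z ≠ 0 := fun h => hz2 (by linarith)
  refine transpose_eq_mul_mul_inv_of_transpose_mul_eq ?_ (transpose_mul_diagonal_eq_diagonal_mul ?_)
  · refine (isUnit_iff_isUnit_det _).mp <| isUnit_diagonal.mpr <| Pi.isUnit_iff.mpr fun i => ?_
    rw [isUnit_iff_ne_zero]
    fin_cases i <;> simp [hg1', hg2', hz1', hz2']
  · intro i j
    fin_cases i <;> fin_cases j <;> simp [H] <;> field_simp <;> ring
end

section
/- For the 6×6 matrix H(g,g;z) with |g| < 1 and |z| < 1, the diagonal metric Θ with entries Θ₁₁ = Θ₆₆ = (1-g)(1-z)/(1+z), Θ₂₂ = Θ₅₅ = 1-g, Θ₃₃ = Θ₄₄ = 1+g is positive definite, and consequently all eigenvalues of H(g,g;z) are real. -/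
/-!
If `Θ` is positive definite and `ΘH` is Hermitian, then `H` is self-adjoint for `⟨u, v⟩_Θ`:
from `Hv = μv`, `v ≠ 0` we get `v*ΘHv = μ · v*Θv`, whose left side is real and where `v*Θv > 0`,
so `μ` is real. A real positive definite `Θ` stays positive definite over `ℂ`, because
`v*Θv = aᵀΘa + bᵀΘb` for `v = a + ib`. For the loop-graph Hamiltonian the diagonal `Θ` has positive
entries when `|g|, |z| < 1`, and `ΘH` is symmetric entry by entry.
-/

open Matrix
open scoped ComplexOrder

namespace Matrix

variable {n : Type*} [Fintype n]

theorem isSymm_diagonal_mul_iff {α : Type*} [Semiring α] [DecidableEq n] {d : n → α}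
    {H : Matrix n n α} : (diagonal d * H).IsSymm ↔ ∀ i j, d i * H i j = d j * H j i := by
  simp only [IsSymm.ext_iff, diagonal_mul]
  exact forall_comm

theorem IsSymm.star_dotProduct_map_ofReal_mulVec {A : Matrix n n ℝ} (hA : A.IsSymm)
    (x : n → ℂ) :
    star x ⬝ᵥ A.map Complex.ofReal *ᵥ x =
      ((fun i => (x i).re) ⬝ᵥ A *ᵥ (fun i => (x i).re) +
        (fun i => (x i).im) ⬝ᵥ A *ᵥ (fun i => (x i).im) : ℝ) := by
  apply Complex.ext
  · simp [dotProduct, mulVec, Finset.mul_sum, ← Finset.sum_add_distrib]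
  · simp only [dotProduct, Pi.star_apply, RCLike.star_def, mulVec, map_apply, Finset.mul_sum,
      Complex.im_sum, Complex.mul_im, Complex.conj_re, Complex.ofReal_re, Complex.ofReal_im,
      zero_mul, add_zero, Complex.conj_im, Complex.mul_re, sub_zero, neg_mul,
      Finset.sum_add_distrib, Finset.sum_neg_distrib, Complex.ofReal_add, Complex.ofReal_sum,
      Complex.ofReal_mul, Complex.add_im, mul_zero, Finset.sum_const_zero, add_neg_eq_zero]
    rw [Finset.sum_comm]
    refine Finset.sum_congr rfl fun i _ => Finset.sum_congr rfl fun j _ => ?_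
    rw [hA.apply i j]
    ring

theorem PosDef.map_ofReal {A : Matrix n n ℝ} (hA : A.PosDef) : (A.map Complex.ofReal).PosDef := by
  refine .of_dotProduct_mulVec_pos (hA.isHermitian.map _ fun _ => (Complex.conj_ofReal _).symm)
    fun x hx => ?_
  have hsymm : A.IsSymm := isHermitian_iff_isSymm.mp hA.isHermitian
  rw [hsymm.star_dotProduct_map_ofReal_mulVec, Complex.zero_lt_real]
  have hquad (y : n → ℝ) : 0 ≤ y ⬝ᵥ A *ᵥ y := by
    simpa using hA.posSemidef.dotProduct_mulVec_nonneg y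
  by_cases hre : (fun i => (x i).re) = 0
  · have him : (fun i => (x i).im) ≠ 0 := fun him =>
      hx (funext fun i => Complex.ext (congrFun hre i) (congrFun him i))
    have := hA.dotProduct_mulVec_pos him
    simp only [star_trivial] at this
    linarith [hquad fun i => (x i).re]
  · have := hA.dotProduct_mulVec_pos hre
    simp only [star_trivial] at this
    linarith [hquad fun i => (x i).im]

theorem PosDef.im_eq_zero_of_mem_spectrum {𝕜 : Type*} [RCLike 𝕜] [DecidableEq n]
    {Θ H : Matrix n n 𝕜} (hΘ : Θ.PosDef) (hΘH : (Θ * H).IsHermitian) {μ : 𝕜}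
    (hμ : μ ∈ spectrum 𝕜 H) : RCLike.im μ = 0 := by
  rw [← spectrum_toLin', ← Module.End.hasEigenvalue_iff_mem_spectrum] at hμ
  obtain ⟨v, hv⟩ := hμ.exists_hasEigenvector
  have hHv : H *ᵥ v = μ • v := by simpa using hv.apply_eq_smul
  have hc := RCLike.pos_iff.mp (hΘ.dotProduct_mulVec_pos hv.2)
  have hq : star v ⬝ᵥ (Θ * H) *ᵥ v = μ * (star v ⬝ᵥ Θ *ᵥ v) := by
    rw [← mulVec_mulVec, hHv, mulVec_smul, dotProduct_smul, smul_eq_mul]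
  have him := hΘH.im_star_dotProduct_mulVec_self v
  rw [hq, RCLike.mul_im, hc.2, mul_zero, zero_add] at him
  exact (mul_eq_zero.mp him).resolve_right hc.1.ne'

theorem PosDef.im_eq_zero_of_mem_spectrum_map_ofReal [DecidableEq n] {Θ H : Matrix n n ℝ}
    (hΘ : Θ.PosDef) (hΘH : (Θ * H).IsSymm) {μ : ℂ} (hμ : μ ∈ spectrum ℂ (H.map Complex.ofReal)) :
    μ.im = 0 := by
  have hherm : (Θ.map Complex.ofReal * H.map Complex.ofReal).IsHermitian := by
    rw [show Θ.map Complex.ofReal * H.map Complex.ofReal = (Θ * H).map Complex.ofReal from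
      (Matrix.map_mul (f := Complex.ofRealHom)).symm]
    exact (isHermitian_iff_isSymm.mpr hΘH).map _ fun _ => (Complex.conj_ofReal _).symm
  exact hΘ.map_ofReal.im_eq_zero_of_mem_spectrum hherm hμ

end Matrix

theorem stmt3 (g z : ℝ) (hg : |g| < 1) (hz : |z| < 1) :
    let H : Matrix (Fin 6) (Fin 6) ℝ :=
      !![2, -1-z, 0, 0, 0, 0;
         -1+z, 3, -1-g, -1-g, 0, 0;
         0, -1+g, 2, 0, -1+g, 0;
         0, -1+g, 0, 2, -1+g, 0;
         0, 0, -1-g, -1-g, 3, -1+z;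
         0, 0, 0, 0, -1-z, 2]
    let Θ : Matrix (Fin 6) (Fin 6) ℝ :=
      Matrix.diagonal ![(1-g)*(1-z)/(1+z), 1-g, 1+g, 1+g, 1-g, (1-g)*(1-z)/(1+z)]
    Θ.PosDef ∧ ∀ μ : ℂ, μ ∈ spectrum ℂ (H.map Complex.ofReal) → μ.im = 0 := by
  intro H Θ
  obtain ⟨hg₁, hg₂⟩ := abs_lt.mp hg
  obtain ⟨hz₁, hz₂⟩ := abs_lt.mp hz
  have hz₀ : 0 < 1 + z := by linarith
  have hΘ : Θ.PosDef := PosDef.diagonal fun i => by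
    fin_cases i <;>
      simp only [Fin.isValue, Fin.mk_one, Fin.reduceFinMk, Fin.zero_eta, cons_val, cons_val_zero,
        cons_val_one] <;>
      first | positivity | linarith
  have hΘH : (Θ * H).IsSymm := by
    refine isSymm_diagonal_mul_iff.mpr fun i j => ?_
    fin_cases i <;> fin_cases j <;>
      simp only [H, of_apply, cons_val', cons_val_fin_one, Fin.isValue, Fin.mk_one,
        Fin.reduceFinMk, Fin.zero_eta, cons_val, cons_val_zero, cons_val_one] <;>
      field_simp <;> ring
  exact ⟨hΘ, fun μ => hΘ.im_eq_zero_of_mem_spectrum_map_ofReal hΘH⟩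
end

section
/- Let g = γ+δ and h = γ-δ. The set of eigenvalues of the 6×6 matrix H(g,h;z) consists of 2 (with multiplicity two), 5/2 ± (1/2)√(21 - 16γ² - 4z²), and 5/2 ± (1/2)√(5 - 16δ² - 4z²). -/
/-!
The matrix commutes with the reversal `i ↦ 5 - i` of its indices, so it splits along the
symmetric and antisymmetric vectors into two tridiagonal `3 × 3` blocks, with couplings
`(a + b, c + d)` and `(a - b, c - d)`. For `H` these couplings are `(-2 - 2γ, -2 + 2γ)` and
`(-2δ, 2δ)`; each block of `λ - H` has determinant `(λ - 2)` times one of the two quadratic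
factors.
-/

open Matrix

namespace Matrix

variable {R : Type*}

def centrosymmSix [Zero R] (a b c d p q r s : R) : Matrix (Fin 6) (Fin 6) R :=
  !![p, r, 0, 0, 0, 0;
     s, q, a, b, 0, 0;
     0, c, p, 0, d, 0;
     0, d, 0, p, c, 0;
     0, 0, b, a, q, s;
     0, 0, 0, 0, r, p]

theorem det_centrosymmSix [CommRing R] (a b c d p q r s : R) :
    (centrosymmSix a b c d p q r s).det =
      (p * (q * p - (a + b) * (c + d)) - r * s * p) *
        (p * (q * p - (a - b) * (c - d)) - r * s * p) := by
  simp [centrosymmSix, det_succ_row_zero, Fin.sum_univ_succ, Fin.succAbove]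
  ring

theorem centrosymmSix_map {S : Type*} [Zero R] [Zero S] (f : R → S) (hf : f 0 = 0)
    (a b c d p q r s : R) :
    (centrosymmSix a b c d p q r s).map f =
      centrosymmSix (f a) (f b) (f c) (f d) (f p) (f q) (f r) (f s) := by
  ext i j
  fin_cases i <;> fin_cases j <;> simp [centrosymmSix, hf]

theorem smul_one_sub_centrosymmSix [Ring R] (t a b c d p q r s : R) :
    t • (1 : Matrix (Fin 6) (Fin 6) R) - centrosymmSix a b c d p q r s =
      centrosymmSix (-a) (-b) (-c) (-d) (t - p) (t - q) (-r) (-s) := by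
  ext i j
  fin_cases i <;> fin_cases j <;> simp [centrosymmSix]

end Matrix

theorem stmt4 (γ δ z : ℝ) :
    let g : ℝ := γ + δ
    let h : ℝ := γ - δ
    let H : Matrix (Fin 6) (Fin 6) ℂ :=
      (!![2, -1-z, 0, 0, 0, 0;
          -1+z, 3, -1-g, -1-h, 0, 0;
          0, -1+g, 2, 0, -1+h, 0;
          0, -1+h, 0, 2, -1+g, 0;
          0, 0, -1-h, -1-g, 3, -1+z;
          0, 0, 0, 0, -1-z, 2] : Matrix (Fin 6) (Fin 6) ℝ).map Complex.ofReal
    ∀ lam : ℂ, (lam • (1 : Matrix (Fin 6) (Fin 6) ℂ) - H).det =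
      (lam - 2)^2 * ((lam - 5/2)^2 - ((21 - 16*(γ:ℂ)^2 - 4*(z:ℂ)^2)/4))
        * ((lam - 5/2)^2 - ((5 - 16*(δ:ℂ)^2 - 4*(z:ℂ)^2)/4)) := by
  intro g h H lam
  have hH : H = (centrosymmSix (-1-g) (-1-h) (-1+g) (-1+h) 2 3 (-1-z) (-1+z)).map
      Complex.ofReal := rfl
  rw [hH, centrosymmSix_map _ Complex.ofReal_zero, smul_one_sub_centrosymmSix,
    det_centrosymmSix]
  simp only [g, h]
  push_cast
  ring
end

section
/- All six eigenvalues of the 6×6 matrix H(g,h;z) are real if and only if 16γ² + 4z² ≤ 21 and 16δ² + 4z² ≤ 5, where γ = (g+h)/2 and δ = (g-h)/2. -/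
open Matrix

/-!
Expanding `det (λ - H)` gives `(λ - 2)² ((2λ - 5)² - a) ((2λ - 5)² - b) / 16` with
`a = 21 - 16γ² - 4z²` and `b = 5 - 16δ² - 4z²`, so the eigenvalues other than `2` are the `(5 + w) / 2`
with `w² = a` or `w² = b`; and a complex number whose square is the real number `a` is real exactly
when `a ≥ 0`.
-/

def loopHamiltonian (g h z : ℝ) : Matrix (Fin 6) (Fin 6) ℝ :=
  !![2, -1-z, 0, 0, 0, 0;
     -1+z, 3, -1-g, -1-h, 0, 0;
     0, -1+g, 2, 0, -1+h, 0;
     0, -1+h, 0, 2, -1+g, 0;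
     0, 0, -1-h, -1-g, 3, -1+z;
     0, 0, 0, 0, -1-z, 2]

namespace Complex

theorem im_eq_zero_of_sq_eq_ofReal {a : ℝ} (ha : 0 ≤ a) {w : ℂ} (hw : w ^ 2 = a) : w.im = 0 := by
  have hsqrt : w ^ 2 = (Real.sqrt a : ℂ) ^ 2 := by
    rw [hw, ← ofReal_pow, Real.sq_sqrt ha]
  rcases sq_eq_sq_iff_eq_or_eq_neg.mp hsqrt with rfl | rfl <;> simp

theorem forall_sq_eq_ofReal_im_eq_zero_iff (a : ℝ) :
    (∀ w : ℂ, w ^ 2 = a → w.im = 0) ↔ 0 ≤ a := by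
  refine ⟨fun hreal => ?_, fun ha w => im_eq_zero_of_sq_eq_ofReal ha⟩
  by_contra! hneg
  have hsq : (I * Real.sqrt (-a)) ^ 2 = a := by
    rw [mul_pow, I_sq, ← ofReal_pow, Real.sq_sqrt (by linarith)]
    push_cast
    ring
  have him := hreal _ hsq
  simp only [mul_im, I_re, I_im, ofReal_re, ofReal_im, zero_mul, one_mul, zero_add] at him
  exact (Real.sqrt_pos.mpr (neg_pos.mpr hneg)).ne' him

end Complex

theorem forall_sq_two_mul_sub_five_eq_im_eq_zero_iff (a : ℝ) :
    (∀ μ : ℂ, (2 * μ - 5) ^ 2 = a → μ.im = 0) ↔ 0 ≤ a := by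
  rw [← Complex.forall_sq_eq_ofReal_im_eq_zero_iff]
  constructor
  · intro hreal w hw
    simpa using hreal ((w + 5) / 2) (by rw [← hw]; ring)
  · intro hreal μ hμ
    simpa using hreal _ hμ

theorem det_algebraMap_sub_loopHamiltonian (g h z : ℝ) (μ : ℂ) :
    16 * (algebraMap ℂ (Matrix (Fin 6) (Fin 6) ℂ) μ - (loopHamiltonian g h z).map Complex.ofReal).det =
      (μ - 2) ^ 2 * ((2 * μ - 5) ^ 2 - (21 - 16 * ((g + h) / 2) ^ 2 - 4 * z ^ 2 : ℝ)) *
        ((2 * μ - 5) ^ 2 - (5 - 16 * ((g - h) / 2) ^ 2 - 4 * z ^ 2 : ℝ)) := by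
  have hM : algebraMap ℂ (Matrix (Fin 6) (Fin 6) ℂ) μ - (loopHamiltonian g h z).map Complex.ofReal =
      !![μ-2, 1+z, 0, 0, 0, 0;
         1-z, μ-3, 1+g, 1+h, 0, 0;
         0, 1-g, μ-2, 0, 1-h, 0;
         0, 1-h, 0, μ-2, 1-g, 0;
         0, 0, 1+h, 1+g, μ-3, 1-z;
         0, 0, 0, 0, 1+z, μ-2] := by
    ext i j
    fin_cases i <;> fin_cases j <;>
      simp [loopHamiltonian, algebraMap_matrix_apply] <;> ring
  rw [hM]
  simp [det_succ_row_zero, Fin.sum_univ_succ, Fin.succAbove]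
  ring

theorem mem_spectrum_loopHamiltonian_iff (g h z : ℝ) (μ : ℂ) :
    μ ∈ spectrum ℂ ((loopHamiltonian g h z).map Complex.ofReal) ↔
      μ = 2 ∨ (2 * μ - 5) ^ 2 = (21 - 16 * ((g + h) / 2) ^ 2 - 4 * z ^ 2 : ℝ) ∨
        (2 * μ - 5) ^ 2 = (5 - 16 * ((g - h) / 2) ^ 2 - 4 * z ^ 2 : ℝ) := by
  rw [spectrum.mem_iff, isUnit_iff_isUnit_det, isUnit_iff_ne_zero, not_ne_iff,
    ← mul_eq_zero_iff_left (by norm_num : (16 : ℂ) ≠ 0), det_algebraMap_sub_loopHamiltonian]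
  simp only [mul_eq_zero, pow_eq_zero_iff two_ne_zero, sub_eq_zero, or_assoc]

theorem stmt5 (g h z : ℝ) :
    let γ : ℝ := (g + h)/2
    let δ : ℝ := (g - h)/2
    let H : Matrix (Fin 6) (Fin 6) ℝ :=
      !![2, -1-z, 0, 0, 0, 0;
         -1+z, 3, -1-g, -1-h, 0, 0;
         0, -1+g, 2, 0, -1+h, 0;
         0, -1+h, 0, 2, -1+g, 0;
         0, 0, -1-h, -1-g, 3, -1+z;
         0, 0, 0, 0, -1-z, 2]
    ((∀ μ : ℂ, μ ∈ spectrum ℂ (H.map Complex.ofReal) → μ.im = 0) ↔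
      (16*γ^2 + 4*z^2 ≤ 21 ∧ 16*δ^2 + 4*z^2 ≤ 5)) := by
  intro γ δ H
  change (∀ μ : ℂ, μ ∈ spectrum ℂ ((loopHamiltonian g h z).map Complex.ofReal) → μ.im = 0) ↔ _
  simp only [mem_spectrum_loopHamiltonian_iff, or_imp, forall_and, forall_eq, Complex.im_ofNat,
    true_and, forall_sq_two_mul_sub_five_eq_im_eq_zero_iff, sub_sub, sub_nonneg]
  rfl
end

section
/- For the 8×8 matrix H(g,g;z) (the K=3 loop-graph Hamiltonian) given by H = [[2,-1-z,0,0,0,0,0,0],[-1+z,2,-1,0,0,0,0,0],[0,-1,3,-1-g,-1-g,0,0,0],[0,0,-1+g,2,0,-1+g,0,0],[0,0,-1+g,0,2,-1+g,0,0],[0,0,0,-1-g,-1-g,3,-1,0],[0,0,0,0,0,-1,2,-1+z],[0,0,0,0,0,0,-1-z,2]], and assuming z ≠ -1, the diagonal matrix Θ with entries Θ₁₁ = Θ₈₈ = (1-z)(1-g)/(1+z), Θ₂₂ = Θ₃₃ = Θ₆₆ = Θ₇₇ = 1-g, Θ₄₄ = Θ₅₅ = 1+g satisfies Hᵀ Θ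 = Θ H. -/
open Matrix

set_option maxHeartbeats 1000000 in
theorem stmt11 (g z : ℝ) (hz : z ≠ -1) :
    let H : Matrix (Fin 8) (Fin 8) ℝ :=
      !![2, -1-z, 0, 0, 0, 0, 0, 0;
         -1+z, 2, -1, 0, 0, 0, 0, 0;
         0, -1, 3, -1-g, -1-g, 0, 0, 0;
         0, 0, -1+g, 2, 0, -1+g, 0, 0;
         0, 0, -1+g, 0, 2, -1+g, 0, 0;
         0, 0, 0, -1-g, -1-g, 3, -1, 0;
         0, 0, 0, 0, 0, -1, 2, -1+z;
         0, 0, 0, 0, 0, 0, -1-z, 2]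
    let Θ : Matrix (Fin 8) (Fin 8) ℝ :=
      Matrix.diagonal ![(1-z)*(1-g)/(1+z), 1-g, 1-g, 1+g, 1+g, 1-g, 1-g, (1-z)*(1-g)/(1+z)]
    Hᵀ * Θ = Θ * H := by
  intro H Θ
  have h1 : (1:ℝ) + z ≠ 0 := fun h => hz (by linarith)
  ext i j
  rw [show Θ = Matrix.diagonal ![(1-z)*(1-g)/(1+z), 1-g, 1-g, 1+g, 1+g, 1-g, 1-g,
      (1-z)*(1-g)/(1+z)] from rfl, Matrix.mul_diagonal, Matrix.diagonal_mul,
    Matrix.transpose_apply]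
  fin_cases i <;> fin_cases j <;>
    simp only [H, Matrix.cons_val', Fin.reduceFinMk, Matrix.cons_val, Matrix.cons_val_zero, Matrix.cons_val_one,
      Matrix.head_cons, Matrix.empty_val', Matrix.cons_val_fin_one, Matrix.of_apply,
      Fin.isValue, Matrix.cons_val_succ, Matrix.head_fin_const,
      mul_zero, zero_mul] <;>
    field_simp <;> ring
end

section
/- For the 8×8 matrix H(g,g;z) (K=3) with |g| < 1 and |z| < 1, all eigenvalues of H are real. -/
open Matrix

/-!
If `Hᵀ Θ = Θ H` for a positive diagonal `Θ`, then `H` is self-adjoint for the inner product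
`⟨x, y⟩_Θ = x* Θ y`, so for an eigenvector `H v = μ v` we get
`μ ⟨v, v⟩_Θ = ⟨v, H v⟩_Θ = ⟨H v, v⟩_Θ = conj μ ⟨v, v⟩_Θ` with `⟨v, v⟩_Θ > 0`, i.e. `μ` is real.
For the matrix at hand such a `Θ` is found by matching the off-diagonal pairs `H i j`, `H j i`.
-/

open scoped ComplexOrder

namespace Matrix

variable {n : Type*} [Fintype n] [DecidableEq n]

theorem exists_mulVec_eq_smul_of_mem_spectrum {K : Type*} [Field K] {A : Matrix n n K} {μ : K}
    (hμ : μ ∈ spectrum K A) : ∃ v ≠ 0, A *ᵥ v = μ • v := by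
  rw [← spectrum_toLin', ← Module.End.hasEigenvalue_iff_mem_spectrum] at hμ
  obtain ⟨v, hv⟩ := hμ.exists_hasEigenvector
  exact ⟨v, hv.2, by simpa using Module.End.mem_eigenspace_iff.mp hv.1⟩

theorem star_eq_self_of_mem_spectrum_of_conjTranspose_mul_eq {𝕜 : Type*} [RCLike 𝕜]
    {A P : Matrix n n 𝕜} (hP : P.PosDef) (hAP : Aᴴ * P = P * A) {μ : 𝕜}
    (hμ : μ ∈ spectrum 𝕜 A) : star μ = μ := by
  obtain ⟨v, hv, hAv⟩ := exists_mulVec_eq_smul_of_mem_spectrum hμ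
  have hq : star v ⬝ᵥ P *ᵥ v ≠ 0 := (hP.dotProduct_mulVec_pos hv).ne'
  refine mul_right_cancel₀ hq ?_
  calc star μ * (star v ⬝ᵥ P *ᵥ v) = star (A *ᵥ v) ⬝ᵥ P *ᵥ v := by
        rw [hAv, star_smul, smul_dotProduct, smul_eq_mul]
    _ = star v ⬝ᵥ (Aᴴ * P) *ᵥ v := by
        simp only [star_mulVec, ← mulVec_mulVec, dotProduct_mulVec]
    _ = star v ⬝ᵥ P *ᵥ (A *ᵥ v) := by rw [hAP, mulVec_mulVec]
    _ = μ * (star v ⬝ᵥ P *ᵥ v) := by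
        rw [hAv, mulVec_smul, dotProduct_smul, smul_eq_mul]

theorem im_eq_zero_of_mem_spectrum_of_transpose_mul_diagonal_eq
    {A : Matrix n n ℝ} {θ : n → ℝ} (hθ : ∀ i, 0 < θ i)
    (hAθ : Aᵀ * diagonal θ = diagonal θ * A) {μ : ℂ}
    (hμ : μ ∈ spectrum ℂ (A.map Complex.ofReal)) : μ.im = 0 := by
  have hP : ((diagonal θ).map Complex.ofReal).PosDef := by
    rw [diagonal_map Complex.ofReal_zero]
    exact .diagonal fun i => Complex.zero_lt_real.mpr (hθ i)
  have hAP : (A.map Complex.ofReal)ᴴ * (diagonal θ).map Complex.ofReal =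
      (diagonal θ).map Complex.ofReal * A.map Complex.ofReal := by
    rw [← conjTranspose_map _ fun x => by simp, conjTranspose_eq_transpose_of_trivial]
    have := congrArg Complex.ofRealHom.mapMatrix hAθ
    rwa [map_mul, map_mul] at this
  exact Complex.conj_eq_iff_im.mp (star_eq_self_of_mem_spectrum_of_conjTranspose_mul_eq hP hAP hμ)

theorem transpose_mul_diagonal_eq_diagonal_mul_iff {R : Type*} [CommSemiring R]
    {A : Matrix n n R} {θ : n → R} :
    Aᵀ * diagonal θ = diagonal θ * A ↔ ∀ i j, A j i * θ j = θ i * A i j := by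
  simp only [← Matrix.ext_iff, mul_diagonal, diagonal_mul, transpose_apply]

end Matrix

theorem stmt12 (g z : ℝ) (hg : |g| < 1) (hz : |z| < 1) :
    let H : Matrix (Fin 8) (Fin 8) ℝ :=
      !![2, -1-z, 0, 0, 0, 0, 0, 0;
         -1+z, 2, -1, 0, 0, 0, 0, 0;
         0, -1, 3, -1-g, -1-g, 0, 0, 0;
         0, 0, -1+g, 2, 0, -1+g, 0, 0;
         0, 0, -1+g, 0, 2, -1+g, 0, 0;
         0, 0, 0, -1-g, -1-g, 3, -1, 0;
         0, 0, 0, 0, 0, -1, 2, -1+z;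
         0, 0, 0, 0, 0, 0, -1-z, 2]
    ∀ μ : ℂ, μ ∈ spectrum ℂ (H.map Complex.ofReal) → μ.im = 0 := by
  intro H μ hμ
  obtain ⟨hg₁, hg₂⟩ := abs_lt.mp hg
  obtain ⟨hz₁, hz₂⟩ := abs_lt.mp hz
  -- the paper's `Θ` multiplied by `1 + z`, which clears its denominators
  let θ : Fin 8 → ℝ := ![(1-z)*(1-g), (1+z)*(1-g), (1+z)*(1-g), (1+z)*(1+g), (1+z)*(1+g),
    (1+z)*(1-g), (1+z)*(1-g), (1-z)*(1-g)]
  have hθ : ∀ i, 0 < θ i := by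
    intro i
    fin_cases i <;> simp [θ] <;> apply mul_pos <;> linarith
  have hHθ : Hᵀ * diagonal θ = diagonal θ * H := by
    rw [transpose_mul_diagonal_eq_diagonal_mul_iff]
    intro i j
    fin_cases i <;> fin_cases j <;> simp [H, θ] <;> ring
  exact im_eq_zero_of_mem_spectrum_of_transpose_mul_diagonal_eq hθ hHθ hμ
end

section
/- Let K ≥ 2, L ≥ 1 and N = 2K+2L, and let H(g,g;z) be the N×N loop-graph Hamiltonian with a 2L-point inner loop: a tridiagonal-plus-loop structure in which rows K and K+2L+1 (the two 'branching' vertices) have diagonal entry 3 and connect symmetrically to two loop chains of L points each with couplings -1∓g, -1±g, the outer two bonds carry couplings -1∓z, and all remaining bonds equal -1 with diagonal 2. For L = 1, the diagonal matrix Θ^{(K,1)} with entries Θ_{j,j} = 1-g for 2 ≤ j ≤ K, Θ_{j,j} = 1+g for K+1 ≤ j ≤ K+2, Θ_{j,j} = 1-g for K+3 ≤ j ≤ 2K+1, and Θ_{1,1} = Θ_{2K+2,2K+2} = (1-z)(1-g)/(1+z), satisfies Hᵀ Θ = Θ H for all g, z with z ≠ -1. -/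
open Matrix

private noncomputable def hf (K : ℕ) (g z : ℝ) (p q : ℕ) : ℝ :=
  if p = q then (if p = K ∨ p = K+3 then 3 else 2)
  else if p = 1 ∧ q = 2 then -1-z
  else if p = 2 ∧ q = 1 then -1+z
  else if p = 2*K+1 ∧ q = 2*K+2 then -1+z
  else if p = 2*K+2 ∧ q = 2*K+1 then -1-z
  else if (p = K ∧ q = K+1) ∨ (p = K ∧ q = K+2)
       ∨ (p = K+3 ∧ q = K+1) ∨ (p = K+3 ∧ q = K+2) then -1-g
  else if (p = K+1 ∧ q = K) ∨ (p = K+2 ∧ q = K)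
       ∨ (p = K+1 ∧ q = K+3) ∨ (p = K+2 ∧ q = K+3) then -1+g
  else if (q = p+1 ∧ ((2 ≤ p ∧ p ≤ K-1) ∨ (K+3 ≤ p ∧ p ≤ 2*K)))
       ∨ (p = q+1 ∧ ((2 ≤ q ∧ q ≤ K-1) ∨ (K+3 ≤ q ∧ q ≤ 2*K))) then -1
  else 0

private noncomputable def df (K : ℕ) (g z : ℝ) (p : ℕ) : ℝ :=
  if p = 1 ∨ p = 2*K+2 then (1-z)*(1-g)/(1+z)
  else if p = K+1 ∨ p = K+2 then 1+g
  else 1-g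

private lemma hf12 (K : ℕ) (g z : ℝ) : hf K g z 1 2 = -1-z := by
  unfold hf; rw [if_neg (by omega), if_pos (by omega)]

private lemma hf21 (K : ℕ) (g z : ℝ) : hf K g z 2 1 = -1+z := by
  unfold hf; rw [if_neg (by omega), if_neg (by omega), if_pos (by omega)]

private lemma hfr1 (K : ℕ) (g z : ℝ) (hK : 2 ≤ K) : hf K g z (2*K+1) (2*K+2) = -1+z := by
  unfold hf
  rw [if_neg (by omega), if_neg (by omega), if_neg (by omega), if_pos (by omega)]

private lemma hfr2 (K : ℕ) (g z : ℝ) (hK : 2 ≤ K) : hf K g z (2*K+2) (2*K+1) = -1-z := by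
  unfold hf
  rw [if_neg (by omega), if_neg (by omega), if_neg (by omega), if_neg (by omega),
    if_pos (by omega)]

private lemma hf_mg (K : ℕ) (g z : ℝ) (hK : 2 ≤ K) (p q : ℕ)
    (h : (p = K ∧ q = K+1) ∨ (p = K ∧ q = K+2)
       ∨ (p = K+3 ∧ q = K+1) ∨ (p = K+3 ∧ q = K+2)) :
    hf K g z p q = -1-g := by
  unfold hf
  rw [if_neg (by omega), if_neg (by omega), if_neg (by omega), if_neg (by omega),
    if_neg (by omega), if_pos (by omega)]

private lemma hf_pg (K : ℕ) (g z : ℝ) (hK : 2 ≤ K) (p q : ℕ)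
    (h : (p = K+1 ∧ q = K) ∨ (p = K+2 ∧ q = K)
       ∨ (p = K+1 ∧ q = K+3) ∨ (p = K+2 ∧ q = K+3)) :
    hf K g z p q = -1+g := by
  unfold hf
  rw [if_neg (by omega), if_neg (by omega), if_neg (by omega), if_neg (by omega),
    if_neg (by omega), if_neg (by omega), if_pos (by omega)]

private lemma hf_tri (K : ℕ) (g z : ℝ) (hK : 2 ≤ K) (p q : ℕ)
    (h : (q = p+1 ∧ ((2 ≤ p ∧ p ≤ K-1) ∨ (K+3 ≤ p ∧ p ≤ 2*K)))
       ∨ (p = q+1 ∧ ((2 ≤ q ∧ q ≤ K-1) ∨ (K+3 ≤ q ∧ q ≤ 2*K)))) :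
    hf K g z p q = -1 := by
  unfold hf
  rw [if_neg (by omega), if_neg (by omega), if_neg (by omega), if_neg (by omega),
    if_neg (by omega), if_neg (by omega), if_neg (by omega), if_pos (by omega)]

private lemma hf_zero (K : ℕ) (g z : ℝ) (p q : ℕ)
    (h1 : ¬ p = q)
    (h2 : ¬ (p = 1 ∧ q = 2))
    (h3 : ¬ (p = 2 ∧ q = 1))
    (h4 : ¬ (p = 2*K+1 ∧ q = 2*K+2))
    (h5 : ¬ (p = 2*K+2 ∧ q = 2*K+1))
    (h6 : ¬ ((p = K ∧ q = K+1) ∨ (p = K ∧ q = K+2)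
       ∨ (p = K+3 ∧ q = K+1) ∨ (p = K+3 ∧ q = K+2)))
    (h7 : ¬ ((p = K+1 ∧ q = K) ∨ (p = K+2 ∧ q = K)
       ∨ (p = K+1 ∧ q = K+3) ∨ (p = K+2 ∧ q = K+3)))
    (h8 : ¬ ((q = p+1 ∧ ((2 ≤ p ∧ p ≤ K-1) ∨ (K+3 ≤ p ∧ p ≤ 2*K)))
       ∨ (p = q+1 ∧ ((2 ≤ q ∧ q ≤ K-1) ∨ (K+3 ≤ q ∧ q ≤ 2*K))))) :
    hf K g z p q = 0 := by
  unfold hf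
  rw [if_neg h1, if_neg h2, if_neg h3, if_neg h4, if_neg h5, if_neg h6, if_neg h7, if_neg h8]

private lemma df_edge (K : ℕ) (g z : ℝ) (p : ℕ) (h : p = 1 ∨ p = 2*K+2) :
    df K g z p = (1-z)*(1-g)/(1+z) := by
  unfold df; rw [if_pos h]

private lemma df_mid (K : ℕ) (g z : ℝ) (hK : 2 ≤ K) (p : ℕ) (h : p = K+1 ∨ p = K+2) :
    df K g z p = 1+g := by
  unfold df; rw [if_neg (by omega), if_pos h]

private lemma df_oth (K : ℕ) (g z : ℝ) (p : ℕ)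
    (h1 : ¬ (p = 1 ∨ p = 2*K+2)) (h2 : ¬ (p = K+1 ∨ p = K+2)) :
    df K g z p = 1-g := by
  unfold df; rw [if_neg h1, if_neg h2]

set_option maxHeartbeats 1600000 in
private lemma key (K : ℕ) (hK : 2 ≤ K) (g z : ℝ) (h1z : (1:ℝ) + z ≠ 0) (p q : ℕ) :
    hf K g z q p * df K g z q = df K g z p * hf K g z p q := by
  by_cases h1 : p = q
  · rw [h1]; exact mul_comm _ _
  by_cases h2 : p = 1 ∧ q = 2
  · obtain ⟨rfl, rfl⟩ := h2
    rw [hf21, hf12, df_edge K g z 1 (by omega), df_oth K g z 2 (by omega) (by omega)]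
    field_simp; ring
  by_cases h3 : p = 2 ∧ q = 1
  · obtain ⟨rfl, rfl⟩ := h3
    rw [hf12, hf21, df_edge K g z 1 (by omega), df_oth K g z 2 (by omega) (by omega)]
    field_simp; ring
  by_cases h4 : p = 2*K+1 ∧ q = 2*K+2
  · obtain ⟨rfl, rfl⟩ := h4
    rw [hfr1 K g z hK, hfr2 K g z hK, df_edge K g z (2*K+2) (by omega),
      df_oth K g z (2*K+1) (by omega) (by omega)]
    field_simp; ring
  by_cases h5 : p = 2*K+2 ∧ q = 2*K+1
  · obtain ⟨rfl, rfl⟩ := h5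
    rw [hfr1 K g z hK, hfr2 K g z hK, df_edge K g z (2*K+2) (by omega),
      df_oth K g z (2*K+1) (by omega) (by omega)]
    field_simp; ring
  by_cases h6 : (p = K ∧ q = K+1) ∨ (p = K ∧ q = K+2)
       ∨ (p = K+3 ∧ q = K+1) ∨ (p = K+3 ∧ q = K+2)
  · rw [hf_pg K g z hK q p (by omega), hf_mg K g z hK p q h6,
      df_mid K g z hK q (by omega), df_oth K g z p (by omega) (by omega)]
    ring
  by_cases h7 : (p = K+1 ∧ q = K) ∨ (p = K+2 ∧ q = K)
       ∨ (p = K+1 ∧ q = K+3) ∨ (p = K+2 ∧ q = K+3)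
  · rw [hf_mg K g z hK q p (by omega), hf_pg K g z hK p q h7,
      df_oth K g z q (by omega) (by omega), df_mid K g z hK p (by omega)]
    ring
  by_cases h8 : (q = p+1 ∧ ((2 ≤ p ∧ p ≤ K-1) ∨ (K+3 ≤ p ∧ p ≤ 2*K)))
       ∨ (p = q+1 ∧ ((2 ≤ q ∧ q ≤ K-1) ∨ (K+3 ≤ q ∧ q ≤ 2*K)))
  · rw [hf_tri K g z hK q p (by omega), hf_tri K g z hK p q h8,
      df_oth K g z q (by omega) (by omega), df_oth K g z p (by omega) (by omega)]
    ring
  · rw [hf_zero K g z q p (fun h => h1 h.symm)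
        (fun h => h3 ⟨h.2, h.1⟩) (fun h => h2 ⟨h.2, h.1⟩)
        (fun h => h5 ⟨h.2, h.1⟩) (fun h => h4 ⟨h.2, h.1⟩)
        (by rintro (⟨a, b⟩ | ⟨a, b⟩ | ⟨a, b⟩ | ⟨a, b⟩)
            exacts [h7 (Or.inl ⟨b, a⟩), h7 (Or.inr (Or.inl ⟨b, a⟩)),
              h7 (Or.inr (Or.inr (Or.inl ⟨b, a⟩))), h7 (Or.inr (Or.inr (Or.inr ⟨b, a⟩)))])
        (by rintro (⟨a, b⟩ | ⟨a, b⟩ | ⟨a, b⟩ | ⟨a, b⟩)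
            exacts [h6 (Or.inl ⟨b, a⟩), h6 (Or.inr (Or.inl ⟨b, a⟩)),
              h6 (Or.inr (Or.inr (Or.inl ⟨b, a⟩))), h6 (Or.inr (Or.inr (Or.inr ⟨b, a⟩)))])
        (by rintro (h' | h'); exacts [h8 (Or.inr h'), h8 (Or.inl h')]),
      hf_zero K g z p q h1 h2 h3 h4 h5 h6 h7 h8]
    ring

theorem stmt13 (K : ℕ) (hK : 2 ≤ K) (g z : ℝ) (hz : z ≠ -1) :
    let H : Matrix (Fin (2*K+2)) (Fin (2*K+2)) ℝ := Matrix.of fun i j =>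
      let p := (i : ℕ) + 1
      let q := (j : ℕ) + 1
      if p = q then (if p = K ∨ p = K+3 then 3 else 2)
      else if p = 1 ∧ q = 2 then -1-z
      else if p = 2 ∧ q = 1 then -1+z
      else if p = 2*K+1 ∧ q = 2*K+2 then -1+z
      else if p = 2*K+2 ∧ q = 2*K+1 then -1-z
      else if (p = K ∧ q = K+1) ∨ (p = K ∧ q = K+2)
           ∨ (p = K+3 ∧ q = K+1) ∨ (p = K+3 ∧ q = K+2) then -1-g
      else if (p = K+1 ∧ q = K) ∨ (p = K+2 ∧ q = K)
           ∨ (p = K+1 ∧ q = K+3) ∨ (p = K+2 ∧ q = K+3) then -1+g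
      else if (q = p+1 ∧ ((2 ≤ p ∧ p ≤ K-1) ∨ (K+3 ≤ p ∧ p ≤ 2*K)))
           ∨ (p = q+1 ∧ ((2 ≤ q ∧ q ≤ K-1) ∨ (K+3 ≤ q ∧ q ≤ 2*K))) then -1
      else 0
    let Θ : Matrix (Fin (2*K+2)) (Fin (2*K+2)) ℝ := Matrix.diagonal fun i =>
      let p := (i : ℕ) + 1
      if p = 1 ∨ p = 2*K+2 then (1-z)*(1-g)/(1+z)
      else if p = K+1 ∨ p = K+2 then 1+g
      else 1-g
    Hᵀ * Θ = Θ * H := by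
  intro H Θ
  have h1z : (1:ℝ) + z ≠ 0 := fun h => hz (by linarith)
  ext i j
  simp only [H, Θ, Matrix.mul_diagonal, Matrix.diagonal_mul, Matrix.transpose_apply,
    Matrix.of_apply]
  exact key K hK g z h1z ((i : ℕ) + 1) ((j : ℕ) + 1)
end

section
/- For every K ≥ 2 and all real g, z with |g| < 1 and |z| < 1, the (2K+2)×(2K+2) loop-graph Hamiltonian H(g,g;z) has entirely real spectrum. -/
/-!
If `D` is positive definite and `D * B` is Hermitian, every eigenvalue `μ` of `B` is real: for an
eigenvector `v`, the number `v* (D B) v = μ · v* D v` is real and `v* D v > 0`. The loop-graph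
Hamiltonian is symmetrized in this way by the positive diagonal matrix `(1 + z) Θ^{(K,1)}`
(`loopWeight`): the identity `d p * H p q = d q * H q p` is checked separately on the two end
edges, the edges at the junction and the edges along the two paths.
-/

open Matrix
open scoped ComplexOrder

theorem Matrix.isSelfAdjoint_of_mem_spectrum_of_posDef_mul_isHermitian
    {n 𝕜 : Type*} [Fintype n] [DecidableEq n] [RCLike 𝕜]
    {D B : Matrix n n 𝕜} (hD : D.PosDef) (hDB : (D * B).IsHermitian) {μ : 𝕜}
    (hμ : μ ∈ spectrum 𝕜 B) : IsSelfAdjoint μ := by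
  rw [← spectrum_toLin'] at hμ
  obtain ⟨v, hv⟩ := (Module.End.hasEigenvalue_iff_mem_spectrum.mpr hμ).exists_hasEigenvector
  have hBv : B *ᵥ v = μ • v := hv.apply_eq_smul
  have hc : 0 < star v ⬝ᵥ (D *ᵥ v) := hD.dotProduct_mulVec_pos hv.2
  have hq : star v ⬝ᵥ ((D * B) *ᵥ v) = μ * star v ⬝ᵥ (D *ᵥ v) := by
    rw [← mulVec_mulVec, hBv, mulVec_smul, dotProduct_smul, smul_eq_mul]
  have hq_self : star (star v ⬝ᵥ ((D * B) *ᵥ v)) = star v ⬝ᵥ ((D * B) *ᵥ v) := by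
    rw [← star_dotProduct, star_mulVec, hDB.eq, ← dotProduct_mulVec]
  rw [hq, star_mul, (IsSelfAdjoint.of_nonneg hc.le).star_eq] at hq_self
  exact mul_left_cancel₀ hc.ne' (hq_self.trans (mul_comm _ _))

theorem Matrix.im_eq_zero_of_mem_spectrum_of_symmetrizable
    {n : Type*} [Fintype n] [DecidableEq n] {A : Matrix n n ℝ} {d : n → ℝ}
    (hd : ∀ i, 0 < d i) (hA : ∀ i j, d i * A i j = d j * A j i)
    {μ : ℂ} (hμ : μ ∈ spectrum ℂ (A.map Complex.ofReal)) : μ.im = 0 := by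
  have hD : (diagonal fun i => (d i : ℂ)).PosDef :=
    .diagonal fun i => by exact_mod_cast hd i
  have hDA : (diagonal (fun i => (d i : ℂ)) * A.map Complex.ofReal).IsHermitian :=
    IsHermitian.ext fun i j => by simp [diagonal_mul, ← Complex.ofReal_mul, hA]
  exact Complex.conj_eq_iff_im.mp
    (isSelfAdjoint_of_mem_spectrum_of_posDef_mul_isHermitian hD hDA hμ)

noncomputable def loopEntry (K : ℕ) (g z : ℝ) (p q : ℕ) : ℝ :=
  if p = q then (if p = K ∨ p = K+3 then 3 else 2)
  else if p = 1 ∧ q = 2 then -1-z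
  else if p = 2 ∧ q = 1 then -1+z
  else if p = 2*K+1 ∧ q = 2*K+2 then -1+z
  else if p = 2*K+2 ∧ q = 2*K+1 then -1-z
  else if (p = K ∧ q = K+1) ∨ (p = K ∧ q = K+2)
       ∨ (p = K+3 ∧ q = K+1) ∨ (p = K+3 ∧ q = K+2) then -1-g
  else if (p = K+1 ∧ q = K) ∨ (p = K+2 ∧ q = K)
       ∨ (p = K+1 ∧ q = K+3) ∨ (p = K+2 ∧ q = K+3) then -1+g
  else if (q = p+1 ∧ ((2 ≤ p ∧ p ≤ K-1) ∨ (K+3 ≤ p ∧ p ≤ 2*K)))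
       ∨ (p = q+1 ∧ ((2 ≤ q ∧ q ≤ K-1) ∨ (K+3 ≤ q ∧ q ≤ 2*K))) then -1
  else 0

noncomputable def loopWeight (K : ℕ) (g z : ℝ) (p : ℕ) : ℝ :=
  if p = K+1 ∨ p = K+2 then (1+g)*(1+z)
  else if p = 1 ∨ p = 2*K+2 then (1-z)*(1-g)
  else (1-g)*(1+z)

section

variable {K : ℕ} {g z : ℝ} {p q : ℕ}

theorem loopWeight_pos (hg : |g| < 1) (hz : |z| < 1) : 0 < loopWeight K g z p := by
  obtain ⟨hg₁, hg₂⟩ := abs_lt.mp hg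
  obtain ⟨hz₁, hz₂⟩ := abs_lt.mp hz
  unfold loopWeight
  split_ifs <;> apply mul_pos <;> linarith

theorem loopWeight_of_junction (h : p = K+1 ∨ p = K+2) : loopWeight K g z p = (1+g)*(1+z) :=
  if_pos h

theorem loopWeight_of_end (hK : 2 ≤ K) (h : p = 1 ∨ p = 2*K+2) :
    loopWeight K g z p = (1-z)*(1-g) := by
  rw [loopWeight, if_neg (by omega), if_pos h]

theorem loopWeight_of_bulk (h₁ : ¬(p = K+1 ∨ p = K+2)) (h₂ : ¬(p = 1 ∨ p = 2*K+2)) :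
    loopWeight K g z p = (1-g)*(1+z) := by
  rw [loopWeight, if_neg h₁, if_neg h₂]

theorem loopWeight_mul_loopEntry_left_end (hK : 2 ≤ K) :
    loopWeight K g z 1 * loopEntry K g z 1 2 = loopWeight K g z 2 * loopEntry K g z 2 1 := by
  -- Each `if_neg`/`if_pos` leaves its branch condition as a side goal, closed by `omega`.
  have h₁₂ : loopEntry K g z 1 2 = -1 - z := by rw [loopEntry, if_neg, if_pos] <;> omega
  have h₂₁ : loopEntry K g z 2 1 = -1 + z := by rw [loopEntry, if_neg, if_neg, if_pos] <;> omega
  rw [h₁₂, h₂₁, loopWeight_of_end hK (.inl rfl), loopWeight_of_bulk (by omega) (by omega)]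
  ring

theorem loopWeight_mul_loopEntry_right_end (hK : 2 ≤ K) :
    loopWeight K g z (2*K+1) * loopEntry K g z (2*K+1) (2*K+2) =
      loopWeight K g z (2*K+2) * loopEntry K g z (2*K+2) (2*K+1) := by
  have h₁₂ : loopEntry K g z (2*K+1) (2*K+2) = -1 + z := by
    rw [loopEntry, if_neg, if_neg, if_neg, if_pos] <;> omega
  have h₂₁ : loopEntry K g z (2*K+2) (2*K+1) = -1 - z := by
    rw [loopEntry, if_neg, if_neg, if_neg, if_neg, if_pos] <;> omega
  rw [h₁₂, h₂₁, loopWeight_of_end hK (.inr rfl), loopWeight_of_bulk (by omega) (by omega)]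
  ring

theorem loopWeight_mul_loopEntry_junction (hK : 2 ≤ K) (hp : p = K ∨ p = K+3)
    (hq : q = K+1 ∨ q = K+2) :
    loopWeight K g z p * loopEntry K g z p q = loopWeight K g z q * loopEntry K g z q p := by
  have h₁₂ : loopEntry K g z p q = -1 - g := by
    rw [loopEntry, if_neg, if_neg, if_neg, if_neg, if_neg, if_pos] <;> omega
  have h₂₁ : loopEntry K g z q p = -1 + g := by
    rw [loopEntry, if_neg, if_neg, if_neg, if_neg, if_neg, if_neg, if_pos] <;> omega
  rw [h₁₂, h₂₁, loopWeight_of_junction hq, loopWeight_of_bulk (by omega) (by omega)]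
  ring

theorem loopWeight_mul_loopEntry_path
    (hp : (2 ≤ p ∧ p ≤ K-1) ∨ (K+3 ≤ p ∧ p ≤ 2*K)) :
    loopWeight K g z p * loopEntry K g z p (p+1) =
      loopWeight K g z (p+1) * loopEntry K g z (p+1) p := by
  have h₁₂ : loopEntry K g z p (p+1) = -1 := by
    rw [loopEntry, if_neg, if_neg, if_neg, if_neg, if_neg, if_neg, if_neg, if_pos] <;> omega
  have h₂₁ : loopEntry K g z (p+1) p = -1 := by
    rw [loopEntry, if_neg, if_neg, if_neg, if_neg, if_neg, if_neg, if_neg, if_pos] <;> omega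
  rw [h₁₂, h₂₁, loopWeight_of_bulk (by omega) (by omega),
    loopWeight_of_bulk (by omega) (by omega)]

theorem loopWeight_mul_loopEntry_comm_of_ne_zero (hK : 2 ≤ K) (hpq : p ≠ q)
    (hE : loopEntry K g z p q ≠ 0) :
    loopWeight K g z p * loopEntry K g z p q = loopWeight K g z q * loopEntry K g z q p := by
  rw [loopEntry, if_neg hpq] at hE
  split_ifs at hE with h₁ h₂ h₃ h₄ h₅ h₆ h₇
  · obtain ⟨rfl, rfl⟩ := h₁
    exact loopWeight_mul_loopEntry_left_end hK
  · obtain ⟨rfl, rfl⟩ := h₂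
    exact (loopWeight_mul_loopEntry_left_end hK).symm
  · obtain ⟨rfl, rfl⟩ := h₃
    exact loopWeight_mul_loopEntry_right_end hK
  · obtain ⟨rfl, rfl⟩ := h₄
    exact (loopWeight_mul_loopEntry_right_end hK).symm
  · exact loopWeight_mul_loopEntry_junction hK (by omega) (by omega)
  · exact (loopWeight_mul_loopEntry_junction hK (by omega) (by omega)).symm
  · rcases h₇ with ⟨rfl, hp⟩ | ⟨rfl, hq⟩
    · exact loopWeight_mul_loopEntry_path hp
    · exact (loopWeight_mul_loopEntry_path hq).symm
  · exact absurd rfl hE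

theorem loopWeight_mul_loopEntry_comm (hK : 2 ≤ K) (p q : ℕ) :
    loopWeight K g z p * loopEntry K g z p q = loopWeight K g z q * loopEntry K g z q p := by
  rcases eq_or_ne p q with rfl | hpq
  · rfl
  by_cases hpq' : loopEntry K g z p q = 0
  · by_cases hqp' : loopEntry K g z q p = 0
    · rw [hpq', hqp', mul_zero, mul_zero]
    · exact (loopWeight_mul_loopEntry_comm_of_ne_zero hK hpq.symm hqp').symm
  · exact loopWeight_mul_loopEntry_comm_of_ne_zero hK hpq hpq'

end

theorem stmt14 (K : ℕ) (hK : 2 ≤ K) (g z : ℝ) (hg : |g| < 1) (hz : |z| < 1) :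
    let H : Matrix (Fin (2*K+2)) (Fin (2*K+2)) ℝ := Matrix.of fun i j =>
      let p := (i : ℕ) + 1
      let q := (j : ℕ) + 1
      if p = q then (if p = K ∨ p = K+3 then 3 else 2)
      else if p = 1 ∧ q = 2 then -1-z
      else if p = 2 ∧ q = 1 then -1+z
      else if p = 2*K+1 ∧ q = 2*K+2 then -1+z
      else if p = 2*K+2 ∧ q = 2*K+1 then -1-z
      else if (p = K ∧ q = K+1) ∨ (p = K ∧ q = K+2)
           ∨ (p = K+3 ∧ q = K+1) ∨ (p = K+3 ∧ q = K+2) then -1-g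
      else if (p = K+1 ∧ q = K) ∨ (p = K+2 ∧ q = K)
           ∨ (p = K+1 ∧ q = K+3) ∨ (p = K+2 ∧ q = K+3) then -1+g
      else if (q = p+1 ∧ ((2 ≤ p ∧ p ≤ K-1) ∨ (K+3 ≤ p ∧ p ≤ 2*K)))
           ∨ (p = q+1 ∧ ((2 ≤ q ∧ q ≤ K-1) ∨ (K+3 ≤ q ∧ q ≤ 2*K))) then -1
      else 0
    ∀ μ : ℂ, μ ∈ spectrum ℂ (H.map Complex.ofReal) → μ.im = 0 := by
  intro H μ hμ
  exact Matrix.im_eq_zero_of_mem_spectrum_of_symmetrizable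
    (A := H) (d := fun i => loopWeight K g z ((i : ℕ) + 1)) (fun _ => loopWeight_pos hg hz)
    (fun _ _ => loopWeight_mul_loopEntry_comm hK _ _) hμ
end

section
/- For the 6×6 matrix H(g,g;z) with |g| < 1 and |z| < 1, the matrix Ω = Θ^{1/2} (with Θ the diagonal positive metric diag((1-g)(1-z)/(1+z), 1-g, 1+g, 1+g, 1-g, (1-g)(1-z)/(1+z))) yields a symmetric matrix 𝔥 = Ω H Ω⁻¹, i.e., 𝔥ᵀ = 𝔥. -/
open Matrix

namespace Matrix

variable {n K : Type*} [Fintype n] [DecidableEq n] [Field K]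

theorem inv_diagonal_of_ne_zero {w : n → K} (hw : ∀ i, w i ≠ 0) :
    (diagonal w)⁻¹ = diagonal w⁻¹ :=
  inv_eq_right_inv <| by
    rw [diagonal_mul_diagonal, ← diagonal_one]
    exact congrArg diagonal (funext fun i => mul_inv_cancel₀ (hw i))

-- The `(i, j)` entry of the conjugate is `wᵢ Mᵢⱼ / wⱼ`, so symmetry amounts to `wᵢ² Mᵢⱼ = wⱼ² Mⱼᵢ`.
theorem transpose_diagonal_mul_mul_inv_eq {w : n → K} (hw : ∀ i, w i ≠ 0) {M : Matrix n n K}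
    (hM : Mᵀ * diagonal (w * w) = diagonal (w * w) * M) :
    (diagonal w * M * (diagonal w)⁻¹)ᵀ = diagonal w * M * (diagonal w)⁻¹ := by
  ext i j
  have hij := congrFun (congrFun hM i) j
  simp only [inv_diagonal_of_ne_zero hw, transpose_apply, mul_diagonal, diagonal_mul,
    Pi.mul_apply, Pi.inv_apply] at hij ⊢
  field_simp [hw i, hw j]
  linear_combination hij

end Matrix

theorem stmt18 (g z : ℝ) (hg : |g| < 1) (hz : |z| < 1) :
    let H : Matrix (Fin 6) (Fin 6) ℝ :=
      !![2, -1-z, 0, 0, 0, 0;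
         -1+z, 3, -1-g, -1-g, 0, 0;
         0, -1+g, 2, 0, -1+g, 0;
         0, -1+g, 0, 2, -1+g, 0;
         0, 0, -1-g, -1-g, 3, -1+z;
         0, 0, 0, 0, -1-z, 2]
    let Ω : Matrix (Fin 6) (Fin 6) ℝ :=
      Matrix.diagonal (fun i =>
        Real.sqrt (![(1-g)*(1-z)/(1+z), 1-g, 1+g, 1+g, 1-g, (1-g)*(1-z)/(1+z)] i))
    (Ω * H * Ω⁻¹)ᵀ = Ω * H * Ω⁻¹ := by
  intro H Ω
  obtain ⟨hg₁, hg₂⟩ := abs_lt.mp hg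
  obtain ⟨hz₁, hz₂⟩ := abs_lt.mp hz
  set θ : Fin 6 → ℝ := ![(1-g)*(1-z)/(1+z), 1-g, 1+g, 1+g, 1-g, (1-g)*(1-z)/(1+z)]
  have hθ : ∀ i, 0 < θ i := by
    have : 0 < (1-g)*(1-z)/(1+z) := div_pos (mul_pos (by linarith) (by linarith)) (by linarith)
    intro i
    fin_cases i <;> simp [θ, this] <;> linarith
  have hsq : (fun i => √(θ i)) * (fun i => √(θ i)) = θ :=
    funext fun i => Real.mul_self_sqrt (hθ i).le
  refine transpose_diagonal_mul_mul_inv_eq (fun i => (Real.sqrt_pos.mpr (hθ i)).ne') ?_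
  rw [hsq]
  have hz₀ : 1 + z ≠ 0 := by linarith
  ext i j
  simp only [transpose_apply, mul_diagonal, diagonal_mul]
  fin_cases i <;> fin_cases j <;> simp [H, θ] <;> field_simp <;> ring
end
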